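/- The symmetric groups form an operadic crossed simplicial group: for all α ∈ S_n, β ∈ S_m and 0 ≤ i ≤ n, one has (1_i ⊞ β ⊞ 1_{n-i}) · s_i^m(α) = s_i^m(α) · (1_{α⁻¹(i)} ⊞ β ⊞ 1_{n-α⁻¹(i)}). -/

import Mathlib

open Equiv

namespace CSGPaper

/-- Transport of a permutation along an equality of index sets. -/
def pcast {a b : ℕ} (h : a = b) (σ : Perm (Fin a)) : Perm (Fin b) :=
  Equiv.permCongr (finCongr h) σ

/-- Block sum of permutations: `σ` acts on the first `a` points, `τ` on the last `b`. -/
def bsum {a b : ℕ} (σ : Perm (Fin a)) (τ : Perm (Fin b)) : Perm (Fin (a + b)) :=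
  Equiv.permCongr finSumFinEquiv (Equiv.sumCongr σ τ)

/-- The degeneracy `s_i` on permutations: duplicate the point `i` in the target and
`σ⁻¹ i` in the source, renumbering order-preservingly. -/
def pdegen {a : ℕ} (i : Fin a) (σ : Perm (Fin a)) : Perm (Fin (a + 1)) :=
  (finSuccEquiv' ((σ.symm i).succ)).trans
    ((Equiv.optionCongr σ).trans (finSuccEquiv' i.succ).symm)

/-- The face `d_i` on permutations: delete the point `i` in the target and `σ⁻¹ i`
in the source, renumbering order-preservingly. -/
def pface {a : ℕ} (i : Fin (a + 1)) (σ : Perm (Fin (a + 1))) : Perm (Fin a) :=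
  Equiv.removeNone ((finSuccEquiv' (σ.symm i)).symm.trans (σ.trans (finSuccEquiv' i)))

/-- The `m`-fold iterated degeneracy at `i` (replacing the point `i` by `m+1` points). -/
def pdegenIter {a : ℕ} (i : Fin a) (σ : Perm (Fin a)) : (m : ℕ) → Perm (Fin (a + m))
  | 0 => σ
  | m + 1 => pdegen (Fin.castLE (Nat.le_add_right a m) i) (pdegenIter i σ m)

/-- `1_i ⊞ τ ⊞ 1_{n-i}` : the permutation `τ` padded by `i` fixed points on the left
and `n - i` fixed points on the right. -/
def ppad {n m : ℕ} (i : Fin (n + 1)) (τ : Perm (Fin (m + 1))) : Perm (Fin (n + m + 1)) :=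
  pcast (show i.val + (m + 1) + (n - i.val) = n + m + 1 by have := i.isLt; omega)
    (bsum (bsum (1 : Perm (Fin i.val)) τ) (1 : Perm (Fin (n - i.val))))

/-- The shifted operadic composition `σ ∘ᵢ τ = (1_i ⊞ τ ⊞ 1_{n-i}) · s_i^m(σ)`. -/
def pcomp {n m : ℕ} (i : Fin (n + 1)) (σ : Perm (Fin (n + 1))) (τ : Perm (Fin (m + 1))) :
    Perm (Fin (n + m + 1)) :=
  ppad i τ * pcast (show n + 1 + m = n + m + 1 by omega) (pdegenIter i σ m)

/-! ### Auxiliary value computations -/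

lemma pcast_val {a b : ℕ} (h : a = b) (σ : Perm (Fin a)) (x : Fin b) :
    ((pcast h σ) x).val = (σ ⟨x.val, h ▸ x.isLt⟩).val := by
  subst h
  simp [pcast, permCongr_apply, finCongr_apply]

lemma bsum_val {a b : ℕ} (σ : Perm (Fin a)) (τ : Perm (Fin b)) (x : Fin (a + b)) :
    ((bsum σ τ) x).val =
      if h : x.val < a then (σ ⟨x.val, h⟩).val
      else a + (τ ⟨x.val - a, by omega⟩).val := by
  have hx := x.isLt
  split
  · next h =>
    have hs : finSumFinEquiv.symm x = Sum.inl ⟨x.val, h⟩ := by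
      rw [Equiv.symm_apply_eq]; apply Fin.ext; simp
    rw [bsum, permCongr_apply, hs]; simp
  · next h =>
    have hs : finSumFinEquiv.symm x = Sum.inr ⟨x.val - a, by omega⟩ := by
      rw [Equiv.symm_apply_eq]; apply Fin.ext; simp; omega
    rw [bsum, permCongr_apply, hs]; simp

lemma finSuccEquiv'_apply_below' {c : ℕ} (p x : Fin (c + 1)) (h : x.val < p.val) :
    finSuccEquiv' p x = some ⟨x.val, by have := p.isLt; omega⟩ := by
  have key := finSuccEquiv'_below (i := p) (m := ⟨x.val, by have := p.isLt; omega⟩)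
    (by exact h)
  have hxe : Fin.castSucc ⟨x.val, by have := p.isLt; omega⟩ = x := by apply Fin.ext; simp
  rw [hxe] at key
  exact key

lemma finSuccEquiv'_apply_above' {c : ℕ} (p x : Fin (c + 1)) (h : p.val < x.val) :
    finSuccEquiv' p x = some ⟨x.val - 1, by have := x.isLt; omega⟩ := by
  have key := finSuccEquiv'_above (i := p) (m := ⟨x.val - 1, by have := x.isLt; omega⟩)
    (by simp only [Fin.le_def, Fin.coe_castSucc]; omega)
  have hxe : Fin.succ ⟨x.val - 1, by have := x.isLt; omega⟩ = x := by
    apply Fin.ext; simp; omega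
  rw [hxe] at key
  exact key

lemma finSuccEquiv'_symm_some_val {c : ℕ} (p : Fin (c + 1)) (z : Fin c) :
    (((finSuccEquiv' p).symm (some z)) : Fin (c+1)).val =
      if z.val < p.val then z.val else z.val + 1 := by
  split
  · next h =>
    rw [finSuccEquiv'_symm_some_below (by exact h)]
    rfl
  · next h =>
    rw [finSuccEquiv'_symm_some_above (by simp only [Fin.le_def, Fin.coe_castSucc]; omega)]
    rfl

/-- Value function of a permutation, extended to all of `ℕ` by the identity. -/
def gfun {c : ℕ} (σ : Perm (Fin c)) (t : ℕ) : ℕ :=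
  if h : t < c then (σ ⟨t, h⟩).val else t

/-- The expected value function of the `m`-fold degeneracy at `i` (with `j = σ⁻¹ i`). -/
def itf (iv jv : ℕ) (g : ℕ → ℕ) (m x : ℕ) : ℕ :=
  if x < jv then (if g x < iv then g x else g x + m)
  else if x ≤ jv + m then iv + (x - jv)
  else (if g (x - m) < iv then g (x - m) else g (x - m) + m)

/-- The expected value function of the padding `1_i ⊞ τ ⊞ 1_{n-i}`. -/
def padf (iv m : ℕ) (g : ℕ → ℕ) (x : ℕ) : ℕ :=
  if x < iv then x else if x < iv + (m + 1) then iv + g (x - iv) else x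

lemma gfun_lt {c : ℕ} (σ : Perm (Fin c)) {t : ℕ} (h : t < c) : gfun σ t < c := by
  rw [gfun, dif_pos h]; exact (σ ⟨t, h⟩).isLt

lemma gfun_eq_iff {c : ℕ} (σ : Perm (Fin c)) {t : ℕ} (h : t < c) (i : Fin c) :
    gfun σ t = i.val ↔ t = (σ.symm i).val := by
  rw [gfun, dif_pos h]
  constructor
  · intro he
    have h1 : σ ⟨t, h⟩ = i := Fin.ext he
    have h2 := congrArg σ.symm h1
    rw [Equiv.symm_apply_apply] at h2
    exact congrArg Fin.val h2
  · intro he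
    have h1 : (⟨t, h⟩ : Fin c) = σ.symm i := Fin.ext he
    rw [h1, Equiv.apply_symm_apply]

lemma itf_lt {iv jv m x : ℕ} (g : ℕ → ℕ) (h : x < jv) :
    itf iv jv g m x = if g x < iv then g x else g x + m := by
  rw [itf, if_pos h]

lemma itf_mid {iv jv m x : ℕ} (g : ℕ → ℕ) (h1 : jv ≤ x) (h2 : x ≤ jv + m) :
    itf iv jv g m x = iv + (x - jv) := by
  rw [itf, if_neg (by omega), if_pos h2]

lemma itf_gt {iv jv m x : ℕ} (g : ℕ → ℕ) (h : jv + m < x) :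
    itf iv jv g m x = if g (x - m) < iv then g (x - m) else g (x - m) + m := by
  rw [itf, if_neg (by omega), if_neg (by omega)]

lemma pdegen_val {a : ℕ} (i : Fin a) (σ : Perm (Fin a)) (x : Fin (a + 1)) :
    ((pdegen i σ) x).val = itf i.val (σ.symm i).val (gfun σ) 1 x.val := by
  have hia := i.isLt
  have hja := (σ.symm i).isLt
  have hx := x.isLt
  rw [pdegen]
  simp only [trans_apply, optionCongr_apply]
  rcases lt_trichotomy x.val ((σ.symm i).val + 1) with h1 | h1 | h1
  · -- x.val ≤ (σ.symm i).val
    rw [finSuccEquiv'_apply_below' _ _ (show x.val < ((σ.symm i).succ).val from by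
      simp [Fin.val_succ]; omega)]
    simp only [Option.map_some]
    rw [finSuccEquiv'_symm_some_val]
    have hxa : x.val < a := by omega
    have hg : gfun σ x.val = (σ ⟨x.val, hxa⟩).val := by rw [gfun, dif_pos hxa]
    rcases Nat.lt_or_ge x.val (σ.symm i).val with h2 | h2
    · -- x < j: σ x ≠ i
      have hne : (σ ⟨x.val, hxa⟩).val ≠ i.val := by
        rw [← hg]; intro he; rw [gfun_eq_iff σ hxa] at he; omega
      rw [itf_lt _ h2, hg]
      simp only [Fin.val_succ]
      split_ifs <;> omega
    · -- x = j : σ x = i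
      have hxj : x.val = (σ.symm i).val := by omega
      have hσx : (σ ⟨x.val, hxa⟩).val = i.val := by
        rw [← hg, gfun_eq_iff σ hxa]; exact hxj
      rw [itf_mid _ (by omega) (by omega), hσx]
      simp only [Fin.val_succ]
      rw [if_pos (by omega)]
      omega
  · -- x = j + 1
    have hxe : x = (σ.symm i).succ := Fin.ext (by simpa using h1)
    rw [hxe, finSuccEquiv'_at]
    simp only [Option.map_none]
    rw [finSuccEquiv'_symm_none]
    rw [itf_mid _ (by simp only [Fin.val_succ]; omega) (by simp only [Fin.val_succ]; omega)]
    simp only [Fin.val_succ]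
    omega
  · -- x > j + 1
    rw [finSuccEquiv'_apply_above' _ _ (show ((σ.symm i).succ).val < x.val from by
      simp [Fin.val_succ]; omega)]
    simp only [Option.map_some]
    rw [finSuccEquiv'_symm_some_val]
    have hxa : x.val - 1 < a := by omega
    have hg : gfun σ (x.val - 1) = (σ ⟨x.val - 1, hxa⟩).val := by rw [gfun, dif_pos hxa]
    have hne : (σ ⟨x.val - 1, hxa⟩).val ≠ i.val := by
      rw [← hg]; intro he; rw [gfun_eq_iff σ hxa] at he; omega
    rw [itf_gt _ (by omega), hg]
    simp only [Fin.val_succ]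
    split_ifs <;> omega

/-- One-step composition law for the value functions of iterated degeneracies. -/
lemma itf_step (iv jv a m : ℕ) (g : ℕ → ℕ) (hj : jv < a) (x : ℕ) (hx : x < a + m + 1) :
    itf iv jv (fun t => if t < a + m then itf iv jv g m t else t) 1 x
      = itf iv jv g (m + 1) x := by
  rcases Nat.lt_or_ge x jv with h1 | h1
  · -- x < jv
    rw [itf_lt _ h1, itf_lt _ h1]
    rw [if_pos (show x < a + m by omega), itf_lt _ h1]
    split_ifs <;> omega
  rcases le_or_gt x (jv + 1) with h2 | h2
  · -- x = jv or x = jv + 1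
    rw [itf_mid _ h1 (by omega), itf_mid _ h1 (by omega)]
  rcases le_or_gt x (jv + m + 1) with h3 | h3
  · -- jv + 1 < x ≤ jv + m + 1
    rw [itf_gt _ (by omega), itf_mid _ h1 (by omega)]
    rw [if_pos (show x - 1 < a + m by omega), itf_mid _ (by omega) (by omega)]
    rw [if_neg (by omega)]
    omega
  · -- x > jv + m + 1
    rw [itf_gt _ (by omega), itf_gt _ (by omega)]
    rw [if_pos (show x - 1 < a + m by omega), itf_gt _ (by omega)]
    have e1 : x - 1 - m = x - (m + 1) := by omega
    rw [e1]
    split_ifs <;> omega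

lemma pdegenIter_val {a : ℕ} (i : Fin a) (σ : Perm (Fin a)) (m : ℕ) (x : Fin (a + m)) :
    ((pdegenIter i σ m) x).val = itf i.val (σ.symm i).val (gfun σ) m x.val := by
  induction m with
  | zero =>
    have hx : x.val < a := x.isLt
    have hg : gfun σ x.val = (σ ⟨x.val, hx⟩).val := by rw [gfun, dif_pos hx]
    have hxe : (⟨x.val, hx⟩ : Fin a) = x := Fin.ext rfl
    rcases lt_trichotomy x.val (σ.symm i).val with h1 | h1 | h1
    · rw [itf_lt _ h1, hg, hxe]
      rw [pdegenIter]
      split_ifs <;> omega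
    · rw [itf_mid _ (by omega) (by omega)]
      have hxs : x = σ.symm i := Fin.ext h1
      rw [pdegenIter, hxs]
      simp
    · rw [itf_gt _ (by omega), Nat.sub_zero, hg, hxe]
      rw [pdegenIter]
      split_ifs <;> omega
  | succ m ih =>
    have hja : (σ.symm i).val < a := (σ.symm i).isLt
    refine Eq.trans
      (pdegen_val (Fin.castLE (Nat.le_add_right a m) i) (pdegenIter i σ m) x) ?_
    have hDj : (pdegenIter i σ m) ⟨(σ.symm i).val, by omega⟩
        = Fin.castLE (Nat.le_add_right a m) i := by
      apply Fin.ext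
      rw [ih]
      simp only [Fin.val_mk]
      rw [itf_mid _ (by omega) (by omega)]
      simp
    have hsymm : ((pdegenIter i σ m).symm (Fin.castLE (Nat.le_add_right a m) i)).val
        = (σ.symm i).val := by
      rw [← hDj, Equiv.symm_apply_apply]
    have hgD : gfun (pdegenIter i σ m)
        = fun t => if t < a + m then itf i.val (σ.symm i).val (gfun σ) m t else t := by
      funext t
      rw [gfun]
      split
      · next h => exact ih ⟨t, h⟩
      · next h => rfl
    rw [hsymm, hgD]
    exact itf_step i.val (σ.symm i).val a m (gfun σ) hja x.val (by have := x.isLt; omega)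

lemma ppad_val {n m : ℕ} (i : Fin (n + 1)) (τ : Perm (Fin (m + 1))) (x : Fin (n + m + 1)) :
    ((ppad i τ) x).val = padf i.val m (gfun τ) x.val := by
  have hx := x.isLt
  have hi := i.isLt
  rw [ppad, pcast_val, bsum_val]
  simp only [Fin.val_mk]
  split
  · next h =>
    rw [bsum_val]
    split
    · next h2 =>
      rw [padf, if_pos h2]
      simp
    · next h2 =>
      have hm : x.val - i.val < m + 1 := by omega
      rw [padf, if_neg h2, if_pos (by omega)]
      have hg : gfun τ (x.val - i.val) = (τ ⟨x.val - i.val, hm⟩).val := by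
        rw [gfun, dif_pos hm]
      rw [hg]
  · next h =>
    rw [padf, if_neg (by omega), if_neg (by omega)]
    simp only [Perm.coe_one, id_eq, Fin.val_mk]
    omega

/-- The combinatorial heart: the padding and the iterated degeneracy value
functions commute appropriately. -/
lemma padf_itf_comm (iv jv n m : ℕ) (ga gb : ℕ → ℕ)
    (hi : iv < n + 1) (hj : jv < n + 1)
    (hga : ∀ t, t < n + 1 → ga t < n + 1) (hgb : ∀ t, t < m + 1 → gb t < m + 1)
    (hji : ga jv = iv) (hinj : ∀ t, t < n + 1 → ga t = iv → t = jv)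
    (x : ℕ) (hx : x < n + m + 1) :
    padf iv m gb (itf iv jv ga m x) = itf iv jv ga m (padf jv m gb x) := by
  rcases Nat.lt_or_ge x jv with h1 | h1
  · -- x < jv
    have hne : ga x ≠ iv := fun he => by have := hinj x (by omega) he; omega
    have hlt : ga x < n + 1 := hga x (by omega)
    rw [itf_lt _ h1]
    rw [show padf jv m gb x = x from by rw [padf, if_pos h1], itf_lt _ h1]
    split_ifs with h2
    · rw [padf, if_pos h2]
    · rw [padf, if_neg (by omega), if_neg (by omega)]
  rcases le_or_gt x (jv + m) with h2 | h2
  · -- jv ≤ x ≤ jv + m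
    have hb : gb (x - jv) < m + 1 := hgb _ (by omega)
    rw [itf_mid _ h1 h2]
    rw [show padf jv m gb x = jv + gb (x - jv) from by
      rw [padf, if_neg (by omega), if_pos (by omega)]]
    rw [itf_mid _ (by omega) (by omega)]
    rw [padf, if_neg (by omega), if_pos (by omega)]
    have e1 : iv + (x - jv) - iv = x - jv := by omega
    have e2 : jv + gb (x - jv) - jv = gb (x - jv) := by omega
    rw [e1, e2]
  · -- x > jv + m
    have htn : x - m < n + 1 := by omega
    have hne : ga (x - m) ≠ iv := fun he => by have := hinj _ htn he; omega
    have hlt : ga (x - m) < n + 1 := hga _ htn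
    rw [itf_gt _ h2]
    rw [show padf jv m gb x = x from by rw [padf, if_neg (by omega), if_neg (by omega)]]
    rw [itf_gt _ h2]
    split_ifs with h3
    · rw [padf, if_pos h3]
    · rw [padf, if_neg (by omega), if_neg (by omega)]

/-- the symmetric groups satisfy the operadicity axiom:
`(1_i ⊞ β ⊞ 1_{n-i}) · s_i^m(α) = s_i^m(α) · (1_{α⁻¹ i} ⊞ β ⊞ 1_{n-α⁻¹ i})`. -/
theorem symm_operadic {n m : ℕ} (i : Fin (n + 1)) (α : Perm (Fin (n + 1)))
    (β : Perm (Fin (m + 1))) :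
    ppad i β * pcast (show n + 1 + m = n + m + 1 by omega) (pdegenIter i α m)
      = pcast (show n + 1 + m = n + m + 1 by omega) (pdegenIter i α m)
          * ppad (α.symm i) β := by
  apply Equiv.ext
  intro x
  apply Fin.ext
  rw [Perm.mul_apply, Perm.mul_apply]
  rw [ppad_val, pcast_val, pcast_val, pdegenIter_val, pdegenIter_val, ppad_val]
  exact padf_itf_comm i.val (α.symm i).val n m (gfun α) (gfun β) i.isLt (α.symm i).isLt
    (fun t ht => gfun_lt α ht) (fun t ht => gfun_lt β ht)
    (by rw [gfun, dif_pos (α.symm i).isLt]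
        congr 1
        rw [show (⟨(α.symm i).val, (α.symm i).isLt⟩ : Fin (n+1)) = α.symm i from Fin.ext rfl,
          Equiv.apply_symm_apply])
    (fun t ht he => by rwa [gfun_eq_iff α ht] at he)
    x.val x.isLt

end CSGPaper
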